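/- arXiv:2508.07008 — 3 statements merged into one kernel-verified Lean document; each statement's English description precedes it below -/
import Mathlib

section
/- Let x ∈ ℝ^m, let ε > 0, let x̃ ∈ ℝ^ℓ be a minimum-error ℓ-simplification of x with Δ = d_dF(x,x̃), and let x' be obtained from x by rounding each entry up to the next multiple of εΔ. Then for every y ∈ ℝ^ℓ, (1−ε)·d_dF(x,y) ≤ d_dF(x',y) ≤ (1+ε)·d_dF(x,y). -/
open scoped Classical

/-- A single step of a traversal: increment first, second, or both coordinates by 1. -/
def IsStep (p q : ℕ × ℕ) : Prop :=
  (q.1 = p.1 + 1 ∧ q.2 = p.2) ∨ (q.1 = p.1 ∧ q.2 = p.2 + 1) ∨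
    (q.1 = p.1 + 1 ∧ q.2 = p.2 + 1)

/-- A traversal of `[m] × [ℓ]`: a sequence of index pairs starting at `(1,1)`,
ending at `(m,ℓ)`, where consecutive pairs differ by a valid step. -/
def IsTraversal (m ℓ : ℕ) (T : List (ℕ × ℕ)) : Prop :=
  T.head? = some (1, 1) ∧ T.getLast? = some (m, ℓ) ∧ T.Chain' IsStep

/-- The cost of a traversal: the maximum of `|x i - y j|` over pairs `(i,j)` in `T`. -/
noncomputable def travCost (x y : ℕ → ℝ) (T : List (ℕ × ℕ)) : ℝ :=
  (T.map (fun p => |x p.1 - y p.2|)).foldr max 0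

/-- The discrete Fréchet distance between time series `x ∈ ℝ^m` and `y ∈ ℝ^ℓ`
(indexed by `1,…,m` and `1,…,ℓ` respectively). -/
noncomputable def dF (m ℓ : ℕ) (x y : ℕ → ℝ) : ℝ :=
  sInf {c | ∃ T, IsTraversal m ℓ T ∧ travCost x y T = c}

/-!
Rounding moves every entry of `x` by at most `εΔ`, and moving the entries of `x` by at most `c`
changes the cost of every traversal, hence the discrete Fréchet distance to any `y`, by at most
`c`. Minimality of the simplification gives `Δ ≤ d_dF(x, y)`, so the additive error `εΔ` is at most
`ε · d_dF(x, y)`.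
-/

theorem List.IsChain.mem_Icc_of_rel_imp_le {α β : Type*} [Preorder β] {R : α → α → Prop}
    {f : α → β} {l : List α} {a b p : α} (hR : ∀ ⦃u v⦄, R u v → f u ≤ f v)
    (hl : l.IsChain R) (ha : l.head? = some a) (hb : l.getLast? = some b) (hp : p ∈ l) :
    f p ∈ Set.Icc (f a) (f b) := by
  have hpw : (l.map f).Pairwise (· ≤ ·) := ((List.isChain_map f).2 (hl.imp hR)).pairwise
  obtain ⟨t, rfl⟩ := List.head?_eq_some_iff.1 ha
  obtain ⟨s, hs⟩ := List.getLast?_eq_some_iff.1 hb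
  refine ⟨?_, ?_⟩
  · simp only [List.map_cons, List.pairwise_cons, List.mem_map] at hpw
    rcases List.mem_cons.1 hp with rfl | hp
    · exact le_rfl
    · exact hpw.1 _ ⟨p, hp, rfl⟩
  · rw [hs] at hpw hp
    simp only [List.map_append, List.pairwise_append, List.mem_map] at hpw
    rcases List.mem_append.1 hp with hp | hp
    · exact hpw.2.2 _ ⟨p, hp, rfl⟩ _ ⟨b, List.mem_singleton_self b, rfl⟩
    · rw [List.mem_singleton.1 hp]

lemma IsStep.fst_le {p q : ℕ × ℕ} (h : IsStep p q) : p.1 ≤ q.1 := by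
  rcases h with ⟨h, -⟩ | ⟨h, -⟩ | ⟨h, -⟩ <;> omega

lemma IsTraversal.fst_mem_Icc {m ℓ : ℕ} {T : List (ℕ × ℕ)} (hT : IsTraversal m ℓ T)
    {p : ℕ × ℕ} (hp : p ∈ T) : p.1 ∈ Set.Icc 1 m :=
  List.IsChain.mem_Icc_of_rel_imp_le (f := Prod.fst) (fun _ _ => IsStep.fst_le) hT.2.2 hT.1
    hT.2.1 hp

lemma travCost_le_iff {x y : ℕ → ℝ} {T : List (ℕ × ℕ)} {c : ℝ} :
    travCost x y T ≤ c ↔ 0 ≤ c ∧ ∀ p ∈ T, |x p.1 - y p.2| ≤ c := by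
  induction T with
  | nil => simp [travCost]
  | cons q T ih =>
    simp only [travCost] at ih
    simp only [travCost, List.map_cons, List.foldr_cons, max_le_iff, ih, List.mem_cons,
      forall_eq_or_imp]
    tauto

lemma travCost_nonneg (x y : ℕ → ℝ) (T : List (ℕ × ℕ)) : 0 ≤ travCost x y T :=
  (travCost_le_iff.1 le_rfl).1

lemma abs_sub_le_travCost {x y : ℕ → ℝ} {T : List (ℕ × ℕ)} {p : ℕ × ℕ} (hp : p ∈ T) :
    |x p.1 - y p.2| ≤ travCost x y T :=
  (travCost_le_iff.1 le_rfl).2 p hp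

lemma dF_eq_sInf_image (m ℓ : ℕ) (x y : ℕ → ℝ) :
    dF m ℓ x y = sInf (travCost x y '' {T | IsTraversal m ℓ T}) := rfl

lemma dF_nonneg (m ℓ : ℕ) (x y : ℕ → ℝ) : 0 ≤ dF m ℓ x y :=
  Real.sInf_nonneg fun _ ⟨T, _, hc⟩ => hc ▸ travCost_nonneg x y T

lemma travCost_le_travCost_add {m ℓ : ℕ} {x x' y : ℕ → ℝ} {c : ℝ} (hc : 0 ≤ c)
    (h : ∀ i, 1 ≤ i → i ≤ m → |x' i - x i| ≤ c) {T : List (ℕ × ℕ)}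
    (hT : IsTraversal m ℓ T) : travCost x' y T ≤ travCost x y T + c := by
  refine travCost_le_iff.2 ⟨add_nonneg (travCost_nonneg x y T) hc, fun p hp => ?_⟩
  obtain ⟨h1, h2⟩ := hT.fst_mem_Icc hp
  calc |x' p.1 - y p.2| ≤ |x' p.1 - x p.1| + |x p.1 - y p.2| := abs_sub_le _ _ _
    _ ≤ c + travCost x y T := add_le_add (h p.1 h1 h2) (abs_sub_le_travCost hp)
    _ = travCost x y T + c := add_comm _ _

lemma dF_le_dF_add {m ℓ : ℕ} {x x' y : ℕ → ℝ} {c : ℝ} (hc : 0 ≤ c)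
    (h : ∀ i, 1 ≤ i → i ≤ m → |x' i - x i| ≤ c) : dF m ℓ x' y ≤ dF m ℓ x y + c := by
  rw [dF_eq_sInf_image, dF_eq_sInf_image]
  rcases Set.eq_empty_or_nonempty {T | IsTraversal m ℓ T} with hempty | hne
  · -- no traversal exists (e.g. `m = 0`): both distances are the junk value `sInf ∅ = 0`
    simpa [hempty] using hc
  rw [← sub_le_iff_le_add]
  refine le_csInf (hne.image _) ?_
  rintro _ ⟨T, hT, rfl⟩
  rw [sub_le_iff_le_add]
  calc sInf (travCost x' y '' {T | IsTraversal m ℓ T}) ≤ travCost x' y T :=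
        csInf_le ⟨0, fun _ ⟨T, _, hc⟩ => hc ▸ travCost_nonneg x' y T⟩ ⟨T, hT, rfl⟩
    _ ≤ travCost x y T + c := travCost_le_travCost_add hc h hT

lemma abs_dF_sub_dF_le {m ℓ : ℕ} {x x' y : ℕ → ℝ} {c : ℝ} (hc : 0 ≤ c)
    (h : ∀ i, 1 ≤ i → i ≤ m → |x' i - x i| ≤ c) : |dF m ℓ x' y - dF m ℓ x y| ≤ c := by
  rw [abs_sub_le_iff, sub_le_iff_le_add', sub_le_iff_le_add']
  exact ⟨dF_le_dF_add hc h,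
    dF_le_dF_add hc fun i hi him => abs_sub_comm (x i) (x' i) ▸ h i hi him⟩

lemma abs_mul_ceil_div_sub_le {δ : ℝ} (hδ : 0 < δ) (a : ℝ) : |δ * ⌈a / δ⌉ - a| ≤ δ := by
  have h1 : a / δ ≤ ⌈a / δ⌉ := Int.le_ceil _
  have h2 : (⌈a / δ⌉ : ℝ) < a / δ + 1 := Int.ceil_lt_add_one _
  rw [div_le_iff₀ hδ] at h1
  rw [← sub_lt_iff_lt_add, lt_div_iff₀ hδ] at h2
  rw [abs_le]
  constructor <;> nlinarith

theorem stmt5_general (m ℓ : ℕ) (ε : ℝ) (hε : 0 < ε)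
    (x xt x' : ℕ → ℝ)
    (hxt : ∀ y : ℕ → ℝ, dF m ℓ x xt ≤ dF m ℓ x y)
    (hx' : ∀ i, 1 ≤ i → i ≤ m →
      x' i = if dF m ℓ x xt = 0 then x i
        else ε * dF m ℓ x xt * ((⌈x i / (ε * dF m ℓ x xt)⌉ : ℤ) : ℝ)) :
    ∀ y : ℕ → ℝ,
      (1 - ε) * dF m ℓ x y ≤ dF m ℓ x' y ∧
      dF m ℓ x' y ≤ (1 + ε) * dF m ℓ x y := by
  intro y
  have hΔ : 0 ≤ dF m ℓ x xt := dF_nonneg m ℓ x xt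
  have hround : ∀ i, 1 ≤ i → i ≤ m → |x' i - x i| ≤ ε * dF m ℓ x xt := by
    intro i hi hin
    rw [hx' i hi hin]
    split_ifs with h0
    · simp [h0]
    · exact abs_mul_ceil_div_sub_le (mul_pos hε (hΔ.lt_of_ne' h0)) _
  have hclose := abs_dF_sub_dF_le (ℓ := ℓ) (y := y) (mul_nonneg hε.le hΔ) hround
  have hεΔ : ε * dF m ℓ x xt ≤ ε * dF m ℓ x y := mul_le_mul_of_nonneg_left (hxt y) hε.le
  rw [abs_sub_le_iff] at hclose
  constructor <;> linarith

/-- Rounding the entries of `x` up to the next multiple of εΔ, where Δ is the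
minimum-error ℓ-simplification error, preserves distances to complexity-ℓ series
up to a factor (1 ± ε). -/
theorem stmt5 (m ℓ : ℕ) (hm : 1 ≤ m) (hl : 1 ≤ ℓ) (ε : ℝ) (hε : 0 < ε)
    (x xt x' : ℕ → ℝ)
    (hxt : ∀ y : ℕ → ℝ, dF m ℓ x xt ≤ dF m ℓ x y)
    (hx' : ∀ i, 1 ≤ i → i ≤ m →
      x' i = if dF m ℓ x xt = 0 then x i
        else ε * dF m ℓ x xt * ((⌈x i / (ε * dF m ℓ x xt)⌉ : ℤ) : ℝ)) :
    ∀ y : ℕ → ℝ,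
      (1 - ε) * dF m ℓ x y ≤ dF m ℓ x' y ∧
      dF m ℓ x' y ≤ (1 + ε) * dF m ℓ x y :=
  stmt5_general m ℓ ε hε x xt x' hxt hx'
end

section
/- Let x ∈ ℝ^m and x' ∈ ℝ^{m'} be time series with set(x) = set(x') and the same set of ℓ-profiles, i.e., D_{(x,ℓ)} = D_{(x',ℓ)}. Then for every y ∈ ℝ^ℓ, d_dF(x,y) = d_dF(x',y). -/
open scoped Classical

/-- The traversal sector of index `j`: the set of values of `x` matched to `j` by `T`. -/
def sectorVals (x : ℕ → ℝ) (T : List (ℕ × ℕ)) (j : ℕ) : Set ℝ :=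
  {v | ∃ i, (i, j) ∈ T ∧ x i = v}

/-- The rank of `z` among the distinct values of `x` (indices `1,…,m`). -/
noncomputable def rnk (m : ℕ) (x : ℕ → ℝ) (z : ℝ) : ℕ :=
  (((Finset.Icc 1 m).image x).filter (fun w => w ≤ z)).card

/-- The ℓ-profile of `(x,T)`: the sequence of pairs of ranks of the minimum and
maximum value in each traversal sector. -/
noncomputable def profileOf (m ℓ : ℕ) (x : ℕ → ℝ) (T : List (ℕ × ℕ)) : List (ℕ × ℕ) :=
  (List.range ℓ).map (fun j =>
    (rnk m x (sInf (sectorVals x T (j + 1))), rnk m x (sSup (sectorVals x T (j + 1)))))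

/-- The set of all ℓ-profiles of `x` over all traversals. -/
noncomputable def profileSet (m ℓ : ℕ) (x : ℕ → ℝ) : Set (List (ℕ × ℕ)) :=
  {p | ∃ T, IsTraversal m ℓ T ∧ p = profileOf m ℓ x T}

/-!
The cost of a traversal is the largest `|x i - y j|` over its pairs. For each `j`, by convexity
of `|· - y j|`, the largest one is attained at the minimum or the maximum of the sector `S_j`,
and these two values are recovered from their ranks in `set(x)`. So the cost is a function of
`set(x)`, `y` and the ℓ-profile alone, the set of traversal costs of `x` is the image of
`D_(x,ℓ)` under this function, and the hypotheses make the two images, hence their infima, equal.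
-/

section Rank

variable {α : Type*} [LinearOrder α]

def rankIn (S : Finset α) (z : α) : ℕ := (S.filter (· ≤ z)).card

lemma rankIn_strictMonoOn (S : Finset α) : StrictMonoOn (rankIn S) S := by
  intro u _ v hv huv
  refine Finset.card_lt_card ⟨fun w hw => ?_, fun hsub => ?_⟩
  · simp only [Finset.mem_filter] at hw ⊢
    exact ⟨hw.1, hw.2.trans huv.le⟩
  · exact huv.not_ge (Finset.mem_filter.mp (hsub (Finset.mem_filter.mpr ⟨hv, le_rfl⟩))).2

noncomputable def valueOfRank [Nonempty α] (S : Finset α) : ℕ → α :=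
  Function.invFunOn (rankIn S) S

lemma valueOfRank_rankIn [Nonempty α] {S : Finset α} {z : α} (hz : z ∈ S) :
    valueOfRank S (rankIn S z) = z :=
  (rankIn_strictMonoOn S).injOn.leftInvOn_invFunOn hz

end Rank

lemma rnk_eq_rankIn (m : ℕ) (x : ℕ → ℝ) (z : ℝ) :
    rnk m x z = rankIn ((Finset.Icc 1 m).image x) z :=
  rfl

namespace List

variable {α : Type*} [LinearOrder α]

lemma le_foldr_max (l : List α) (b : α) : b ≤ l.foldr max b := by
  induction l with
  | nil => exact le_rfl
  | cons a l ih => exact ih.trans (le_max_right _ _)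

lemma foldr_max_le_foldr_max {l l' : List α} {b : α}
    (h : ∀ a ∈ l, ∃ a' ∈ l', a ≤ a') : l.foldr max b ≤ l'.foldr max b := by
  induction l with
  | nil => exact le_foldr_max l' b
  | cons a l ih =>
    obtain ⟨a', ha', hle⟩ := h a mem_cons_self
    exact max_le (le_max_of_le' b ha' hle) (ih fun c hc => h c (mem_cons_of_mem a hc))

lemma foldr_max_eq_foldr_max {l l' : List α} {b : α}
    (h : ∀ a ∈ l, ∃ a' ∈ l', a ≤ a') (h' : ∀ a' ∈ l', ∃ a ∈ l, a' ≤ a) :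
    l.foldr max b = l'.foldr max b :=
  (foldr_max_le_foldr_max h).antisymm (foldr_max_le_foldr_max h')

/-- A discrete intermediate value property. -/
lemma mem_of_isChain_le_succ {j : ℕ} :
    ∀ {a : ℕ} {l : List ℕ}, (a :: l).IsChain (fun u v => v ≤ u + 1) → a ≤ j →
      (∃ b ∈ a :: l, j ≤ b) → j ∈ a :: l
  | a, [], _, haj, ⟨b, hb, hjb⟩ => by
    rw [mem_singleton] at hb ⊢
    omega
  | a, r :: l, hchain, haj, ⟨b, hb, hjb⟩ => by
    rcases haj.eq_or_lt with rfl | haj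
    · exact mem_cons_self
    obtain ⟨hr, hchain⟩ := isChain_cons_cons.mp hchain
    refine mem_cons_of_mem a (mem_of_isChain_le_succ hchain (by omega) ⟨b, ?_, hjb⟩)
    rcases mem_cons.mp hb with rfl | hb
    · omega
    · exact hb

end List

lemma IsStep.le {p q : ℕ × ℕ} (h : IsStep p q) : p ≤ q := by
  rcases h with ⟨h1, h2⟩ | ⟨h1, h2⟩ | ⟨h1, h2⟩ <;> exact ⟨by omega, by omega⟩

lemma IsStep.snd_le_succ {p q : ℕ × ℕ} (h : IsStep p q) : q.2 ≤ p.2 + 1 := by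
  rcases h with ⟨h1, h2⟩ | ⟨h1, h2⟩ | ⟨h1, h2⟩ <;> omega

namespace IsTraversal

variable {m ℓ : ℕ} {T : List (ℕ × ℕ)}

lemma mem_bounds (hT : IsTraversal m ℓ T) {p : ℕ × ℕ} (hp : p ∈ T) :
    (1, 1) ≤ p ∧ p ≤ (m, ℓ) := by
  obtain ⟨hhead, hlast, hchain⟩ := hT
  have hsorted : T.Pairwise (· ≤ ·) := (hchain.imp fun _ _ h => h.le).pairwise
  obtain ⟨tail, rfl⟩ := List.head?_eq_some_iff.mp hhead
  obtain ⟨init, hinit⟩ := List.getLast?_eq_some_iff.mp hlast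
  constructor
  · rcases List.mem_cons.mp hp with rfl | hp
    · exact le_rfl
    · exact List.rel_of_pairwise_cons hsorted hp
  · rw [hinit] at hsorted hp
    rcases List.mem_append.mp hp with hp | hp
    · exact List.pairwise_append.mp hsorted |>.2.2 p hp _ (List.mem_singleton_self _)
    · rw [List.mem_singleton.mp hp]

lemma exists_mem_snd_eq (hT : IsTraversal m ℓ T) {j : ℕ} (hj1 : 1 ≤ j) (hj2 : j ≤ ℓ) :
    ∃ i, (i, j) ∈ T := by
  obtain ⟨hhead, hlast, hchain⟩ := hT
  obtain ⟨tail, hT⟩ := List.head?_eq_some_iff.mp hhead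
  have hchain' : (T.map Prod.snd).IsChain (fun u v => v ≤ u + 1) :=
    (List.isChain_map Prod.snd).mpr <|
      hchain.imp fun p q h => show q.2 ≤ p.2 + 1 from h.snd_le_succ
  have hℓ : ℓ ∈ T.map Prod.snd :=
    List.mem_map_of_mem (f := Prod.snd) (List.mem_of_getLast? hlast)
  rw [hT, List.map_cons] at hchain' hℓ
  have hj := List.mem_of_isChain_le_succ hchain' hj1 ⟨ℓ, hℓ, hj2⟩
  rw [← List.map_cons, ← hT] at hj
  obtain ⟨p, hp, rfl⟩ := List.mem_map.mp hj
  exact ⟨p.1, hp⟩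

end IsTraversal

section Sector

variable {m ℓ : ℕ} {x : ℕ → ℝ} {T : List (ℕ × ℕ)}

lemma sectorVals_subset_image (hT : IsTraversal m ℓ T) (j : ℕ) :
    sectorVals x T j ⊆ ((Finset.Icc 1 m).image x : Set ℝ) := by
  rintro _ ⟨i, hi, rfl⟩
  have := hT.mem_bounds hi
  exact Finset.mem_coe.mpr (Finset.mem_image_of_mem x (Finset.mem_Icc.mpr ⟨this.1.1, this.2.1⟩))

lemma sectorVals_finite (hT : IsTraversal m ℓ T) (j : ℕ) : (sectorVals x T j).Finite :=
  (Finset.finite_toSet _).subset (sectorVals_subset_image hT j)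

lemma sInf_sectorVals_mem (hT : IsTraversal m ℓ T) {j : ℕ} (hj1 : 1 ≤ j) (hj2 : j ≤ ℓ) :
    sInf (sectorVals x T j) ∈ sectorVals x T j :=
  Set.Nonempty.csInf_mem (let ⟨i, hi⟩ := hT.exists_mem_snd_eq hj1 hj2; ⟨x i, i, hi, rfl⟩)
    (sectorVals_finite hT j)

lemma sSup_sectorVals_mem (hT : IsTraversal m ℓ T) {j : ℕ} (hj1 : 1 ≤ j) (hj2 : j ≤ ℓ) :
    sSup (sectorVals x T j) ∈ sectorVals x T j :=
  Set.Nonempty.csSup_mem (let ⟨i, hi⟩ := hT.exists_mem_snd_eq hj1 hj2; ⟨x i, i, hi, rfl⟩)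
    (sectorVals_finite hT j)

end Sector

noncomputable def sectorCost (x y : ℕ → ℝ) (T : List (ℕ × ℕ)) (j : ℕ) : ℝ :=
  max |sInf (sectorVals x T j) - y j| |sSup (sectorVals x T j) - y j|

lemma travCost_eq_foldr_sectorCost {m ℓ : ℕ} {x : ℕ → ℝ} (y : ℕ → ℝ) {T : List (ℕ × ℕ)}
    (hT : IsTraversal m ℓ T) :
    travCost x y T = ((List.range ℓ).map fun j => sectorCost x y T (j + 1)).foldr max 0 := by
  apply List.foldr_max_eq_foldr_max
  · rintro _ ha
    obtain ⟨p, hp, rfl⟩ := List.mem_map.mp ha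
    obtain ⟨⟨-, hj1⟩, ⟨-, hj2⟩⟩ := hT.mem_bounds hp
    refine ⟨sectorCost x y T p.2, List.mem_map.mpr ⟨p.2 - 1, by simp; omega, by congr; omega⟩, ?_⟩
    have hmem : x p.1 ∈ sectorVals x T p.2 := ⟨p.1, hp, rfl⟩
    exact abs_le_max_abs_abs
      (sub_le_sub_right (csInf_le (sectorVals_finite hT _).bddBelow hmem) _)
      (sub_le_sub_right (le_csSup (sectorVals_finite hT _).bddAbove hmem) _)
  · rintro _ ha
    obtain ⟨j, hj, rfl⟩ := List.mem_map.mp ha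
    rw [List.mem_range] at hj
    have hextreme : ∀ z ∈ sectorVals x T (j + 1),
        ∃ a ∈ T.map (fun p => |x p.1 - y p.2|), |z - y (j + 1)| ≤ a := by
      rintro _ ⟨i, hi, rfl⟩
      exact ⟨_, List.mem_map_of_mem hi, le_rfl⟩
    rcases max_choice |sInf (sectorVals x T (j + 1)) - y (j + 1)|
        |sSup (sectorVals x T (j + 1)) - y (j + 1)| with h | h <;>
      rw [sectorCost, h]
    · exact hextreme _ (sInf_sectorVals_mem hT (by omega) (by omega))
    · exact hextreme _ (sSup_sectorVals_mem hT (by omega) (by omega))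

noncomputable def costOfProfile (S : Finset ℝ) (y : ℕ → ℝ) (p : List (ℕ × ℕ)) : ℝ :=
  (p.mapIdx fun j r =>
    max |valueOfRank S r.1 - y (j + 1)| |valueOfRank S r.2 - y (j + 1)|).foldr max 0

lemma costOfProfile_profileOf {m ℓ : ℕ} {x : ℕ → ℝ} (y : ℕ → ℝ) {T : List (ℕ × ℕ)}
    (hT : IsTraversal m ℓ T) :
    costOfProfile ((Finset.Icc 1 m).image x) y (profileOf m ℓ x T) =
      ((List.range ℓ).map fun j => sectorCost x y T (j + 1)).foldr max 0 := by
  rw [costOfProfile]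
  congr 1
  refine List.ext_getElem (by simp [profileOf]) fun j hj _ => ?_
  have hjℓ : j < ℓ := by simpa [profileOf] using hj
  simp only [profileOf, List.getElem_mapIdx, List.getElem_map, List.getElem_range, sectorCost]
  have hS : ∀ z ∈ sectorVals x T (j + 1),
      valueOfRank ((Finset.Icc 1 m).image x) (rnk m x z) = z := fun z hz => by
    rw [rnk_eq_rankIn]
    exact valueOfRank_rankIn (sectorVals_subset_image hT _ hz)
  rw [hS _ (sInf_sectorVals_mem hT (by omega) (by omega)),
    hS _ (sSup_sectorVals_mem hT (by omega) (by omega))]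

lemma travCost_eq_costOfProfile {m ℓ : ℕ} {x : ℕ → ℝ} (y : ℕ → ℝ) {T : List (ℕ × ℕ)}
    (hT : IsTraversal m ℓ T) :
    travCost x y T = costOfProfile ((Finset.Icc 1 m).image x) y (profileOf m ℓ x T) := by
  rw [travCost_eq_foldr_sectorCost y hT, costOfProfile_profileOf y hT]

lemma travCosts_eq_image_profileSet (m ℓ : ℕ) (x y : ℕ → ℝ) :
    {c | ∃ T, IsTraversal m ℓ T ∧ travCost x y T = c} =
      costOfProfile ((Finset.Icc 1 m).image x) y '' profileSet m ℓ x := by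
  ext c
  constructor
  · rintro ⟨T, hT, rfl⟩
    exact ⟨_, ⟨T, hT, rfl⟩, (travCost_eq_costOfProfile y hT).symm⟩
  · rintro ⟨_, ⟨T, hT, rfl⟩, rfl⟩
    exact ⟨T, hT, travCost_eq_costOfProfile y hT⟩

theorem stmt8_general (m m' ℓ : ℕ)
    (x x' : ℕ → ℝ)
    (hset : (Finset.Icc 1 m).image x = (Finset.Icc 1 m').image x')
    (hprof : profileSet m ℓ x = profileSet m' ℓ x') :
    ∀ y : ℕ → ℝ, dF m ℓ x y = dF m' ℓ x' y := by
  intro y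
  rw [dF, dF, travCosts_eq_image_profileSet, travCosts_eq_image_profileSet, hset, hprof]

/-- Two time series with the same value set and the same set of ℓ-profiles are
at the same discrete Fréchet distance to every complexity-ℓ series. -/
theorem stmt8 (m m' ℓ : ℕ) (hm : 1 ≤ m) (hm' : 1 ≤ m') (hl : 1 ≤ ℓ)
    (x x' : ℕ → ℝ)
    (hset : (Finset.Icc 1 m).image x = (Finset.Icc 1 m').image x')
    (hprof : profileSet m ℓ x = profileSet m' ℓ x') :
    ∀ y : ℕ → ℝ, dF m ℓ x y = dF m' ℓ x' y :=
  stmt8_general m m' ℓ x x' hset hprof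
end

section
/- For every r, ℓ ∈ ℕ there exists a constant f(r,ℓ) ∈ ℕ such that: for every m ∈ ℕ and every time series x ∈ ℝ^m with at most r distinct values, there exists a time series y of complexity at most f(r,ℓ) with set(y) = set(x) such that d_dF(x,q) = d_dF(y,q) for every q ∈ ℝ^ℓ. -/
open scoped Classical

/-!
A traversal of `x` against `q` costs the maximum of `|x i - q j|` over the set of pairs
`(x i, j)` it visits, so `dF m ℓ x q` depends only on the family of these sets. Writing `x` as an
enumeration of its value set composed with a series of indices, that family is determined by the
enumeration and the family of the index series, and for at most `r` values the latter is a set of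
subsets of `[0, r) × [1, ℓ]`. There are finitely many of those, and a shortest series realizing
each one gives the bound `f`.
-/

open Finset

section Enumeration

variable {α : Type*} [DecidableEq α]

noncomputable def toIndex (V : Finset α) (v : α) : ℕ :=
  if h : v ∈ V then V.equivFin ⟨v, h⟩ else 0

noncomputable def ofIndex [Inhabited α] (V : Finset α) (i : ℕ) : α :=
  if h : i < V.card then V.equivFin.symm ⟨i, h⟩ else default

lemma ofIndex_toIndex [Inhabited α] {V : Finset α} {v : α} (h : v ∈ V) :
    ofIndex V (toIndex V v) = v := by
  simp [toIndex, ofIndex, h]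

lemma image_toIndex (V : Finset α) : V.image (toIndex V) = range V.card := by
  ext i
  simp only [mem_image, mem_range]
  constructor
  · rintro ⟨v, hv, rfl⟩
    simp [toIndex, hv]
  · intro hi
    exact ⟨V.equivFin.symm ⟨i, hi⟩, coe_mem _, by simp [toIndex]⟩

lemma image_ofIndex [Inhabited α] (V : Finset α) : (range V.card).image (ofIndex V) = V := by
  conv_rhs => rw [← image_id (s := V)]
  rw [← image_toIndex, image_image]
  exact image_congr fun v hv => ofIndex_toIndex hv

end Enumeration

lemma IsTraversal.toFinset_subset {m ℓ : ℕ} {T : List (ℕ × ℕ)} (hT : IsTraversal m ℓ T) :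
    T.toFinset ⊆ Icc 1 m ×ˢ Icc 1 ℓ := by
  obtain ⟨hhead, hlast, hchain⟩ := hT
  let R : ℕ × ℕ → ℕ × ℕ → Prop := fun p q => p.1 ≤ q.1 ∧ p.2 ≤ q.2
  have hpw : T.Pairwise R := by
    refine List.isChain_iff_pairwise.mp (hchain.imp fun p q h => ?_)
    rcases h with ⟨h1, h2⟩ | ⟨h1, h2⟩ | ⟨h1, h2⟩ <;> exact ⟨by omega, by omega⟩
  obtain ⟨T, rfl⟩ : ∃ T', T = (1, 1) :: T' := by
    cases T with
    | nil => simp at hhead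
    | cons a T =>
      simp only [List.head?_cons, Option.some.injEq] at hhead
      exact ⟨T, by rw [hhead]⟩
  intro p hp
  rw [List.mem_toFinset] at hp
  have hlow : R (1, 1) p := by
    rcases List.mem_cons.mp hp with rfl | hp
    · exact ⟨le_rfl, le_rfl⟩
    · exact List.rel_of_pairwise_cons hpw hp
  have hup : R p (m, ℓ) := by
    rw [← List.dropLast_append_getLast? _ hlast] at hpw hp
    rcases List.mem_append.mp hp with hp | hp
    · exact (List.pairwise_append.mp hpw).2.2 p hp _ (List.mem_singleton_self _)
    · rw [List.mem_singleton.mp hp]; exact ⟨le_rfl, le_rfl⟩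
  simp only [mem_product, mem_Icc]
  exact ⟨⟨hlow.1, hup.1⟩, hlow.2, hup.2⟩

section Profiles

variable {α : Type*} [DecidableEq α]

def traversalProfile (x : ℕ → α) (T : List (ℕ × ℕ)) : Finset (α × ℕ) :=
  T.toFinset.image fun p => (x p.1, p.2)

def profiles (m ℓ : ℕ) (x : ℕ → α) : Set (Finset (α × ℕ)) :=
  traversalProfile x '' {T | IsTraversal m ℓ T}

variable {m ℓ : ℕ}

lemma profiles_comp {β : Type*} [DecidableEq β] (f : α → β) (x : ℕ → α) :
    profiles m ℓ (f ∘ x) = image (Prod.map f id) '' profiles m ℓ x := by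
  simp only [profiles, Set.image_image, traversalProfile, image_image]
  rfl

lemma profiles_congr {x y : ℕ → α} (h : ∀ i ∈ Icc 1 m, x i = y i) :
    profiles m ℓ x = profiles m ℓ y :=
  Set.image_congr fun _ hT => image_congr fun p hp => by
    rw [h p.1 (mem_product.mp (hT.toFinset_subset hp)).1]

lemma subset_of_mem_profiles {x : ℕ → α} {S : Finset (α × ℕ)} (hS : S ∈ profiles m ℓ x) :
    S ⊆ (Icc 1 m ×ˢ Icc 1 ℓ).image fun p => (x p.1, p.2) := by
  obtain ⟨T, hT, rfl⟩ := hS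
  exact image_subset_image hT.toFinset_subset

end Profiles

lemma travCost_eq_fold_traversalProfile (x q : ℕ → ℝ) (T : List (ℕ × ℕ)) :
    travCost x q T = (traversalProfile x T).fold max 0 fun s => |s.1 - q s.2| := by
  induction T with
  | nil => rfl
  | cons p T ih =>
    rw [traversalProfile, List.toFinset_cons, image_insert, fold_insert_idem, ← traversalProfile,
      ← ih]
    rfl

lemma dF_eq_of_profiles_eq {m m' ℓ : ℕ} {x y : ℕ → ℝ} (h : profiles m ℓ x = profiles m' ℓ y)
    (q : ℕ → ℝ) : dF m ℓ x q = dF m' ℓ y q := by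
  have key : ∀ n (z : ℕ → ℝ), dF n ℓ z q =
      sInf ((fun S => S.fold max 0 fun s => |s.1 - q s.2|) '' profiles n ℓ z) := by
    intro n z
    simp only [dF, profiles, Set.image_image, ← travCost_eq_fold_traversalProfile]
    rfl
  rw [key, key, h]

section IndexProfiles

variable {α : Type*} [DecidableEq α]

noncomputable def indexProfiles (ℓ m : ℕ) (x : ℕ → α) : ℕ × Set (Finset (ℕ × ℕ)) :=
  ((Icc 1 m).image x |>.card, profiles m ℓ (toIndex ((Icc 1 m).image x) ∘ x))

lemma indexProfiles_mem {r ℓ m : ℕ} {x : ℕ → α} (hx : ((Icc 1 m).image x).card ≤ r) :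
    indexProfiles ℓ m x ∈ Set.Iic r ×ˢ 𝒫 ↑(range r ×ˢ Icc 1 ℓ).powerset := by
  refine ⟨hx, fun S hS => ?_⟩
  rw [mem_coe, mem_powerset]
  refine (subset_of_mem_profiles hS).trans fun s hs => ?_
  obtain ⟨p, hp, rfl⟩ := mem_image.mp hs
  obtain ⟨hp1, hp2⟩ := mem_product.mp hp
  have hidx : toIndex ((Icc 1 m).image x) (x p.1) ∈ range ((Icc 1 m).image x).card := by
    rw [← image_toIndex]
    exact mem_image_of_mem _ (mem_image_of_mem x hp1)
  exact mem_product.mpr ⟨mem_range.mpr ((mem_range.mp hidx).trans_le hx), hp2⟩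

lemma exists_profiles_eq_of_indexProfiles_eq [Inhabited α] {ℓ m m' : ℕ} {x x' : ℕ → α}
    (h : indexProfiles ℓ m' x' = indexProfiles ℓ m x) :
    ∃ y : ℕ → α, (Icc 1 m').image y = (Icc 1 m).image x ∧ profiles m' ℓ y = profiles m ℓ x := by
  set V := (Icc 1 m).image x
  set V' := (Icc 1 m').image x'
  have hcard : V'.card = V.card := congrArg Prod.fst h
  have hprof : profiles m' ℓ (toIndex V' ∘ x') = profiles m ℓ (toIndex V ∘ x) :=
    congrArg Prod.snd h
  refine ⟨ofIndex V ∘ toIndex V' ∘ x', ?_, ?_⟩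
  · rw [← image_image, ← image_image, image_toIndex, hcard, image_ofIndex]
  · rw [profiles_comp, hprof, ← profiles_comp]
    exact profiles_congr fun i hi => ofIndex_toIndex (mem_image_of_mem x hi)

end IndexProfiles

lemma exists_bounded_representative {α β : Type*} {s : Set α} (κ : α → β) (len : α → ℕ)
    (h : (κ '' s).Finite) : ∃ f : ℕ, ∀ a ∈ s, ∃ b ∈ s, κ b = κ a ∧ len b ≤ f := by
  have : Finite (κ '' s) := h.to_subtype
  choose rep hrep_mem hrep_eq using fun c : κ '' s => c.2
  obtain ⟨f, hf⟩ := (Set.finite_range (len ∘ rep)).bddAbove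
  exact ⟨f, fun a ha => ⟨rep ⟨κ a, a, ha, rfl⟩, hrep_mem _, hrep_eq _, hf ⟨_, rfl⟩⟩⟩

theorem stmt10_general (r ℓ : ℕ) :
    ∃ f : ℕ, ∀ m : ℕ, 1 ≤ m → ∀ x : ℕ → ℝ,
      ((Finset.Icc 1 m).image x).card ≤ r →
      ∃ m' : ℕ, 1 ≤ m' ∧ m' ≤ f ∧ ∃ y : ℕ → ℝ,
        (Finset.Icc 1 m').image y = (Finset.Icc 1 m).image x ∧
        ∀ q : ℕ → ℝ, dF m ℓ x q = dF m' ℓ y q := by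
  let s : Set (ℕ × (ℕ → ℝ)) := {a | 1 ≤ a.1 ∧ ((Icc 1 a.1).image a.2).card ≤ r}
  have hfin : ((fun a => indexProfiles ℓ a.1 a.2) '' s).Finite :=
    ((Set.finite_Iic r).prod (finite_toSet _).finite_subsets).subset
      (Set.image_subset_iff.mpr fun a ha => indexProfiles_mem ha.2)
  obtain ⟨f, hf⟩ := exists_bounded_representative _ Prod.fst hfin
  refine ⟨f, fun m hm x hx => ?_⟩
  obtain ⟨⟨m', x'⟩, ⟨hm', -⟩, hκ, hle⟩ := hf (m, x) ⟨hm, hx⟩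
  obtain ⟨y, himage, hprof⟩ := exists_profiles_eq_of_indexProfiles_eq hκ
  exact ⟨m', hm', hle, y, himage, fun q => (dF_eq_of_profiles_eq hprof q).symm⟩

/-- For every r and ℓ there is a uniform complexity bound f(r,ℓ) such that every
series with at most r distinct values can be replaced by one of complexity at
most f(r,ℓ), with the same value set and the same distance to every
complexity-ℓ series. -/
theorem stmt10 (r ℓ : ℕ) (hl : 1 ≤ ℓ) :
    ∃ f : ℕ, ∀ m : ℕ, 1 ≤ m → ∀ x : ℕ → ℝ,
      ((Finset.Icc 1 m).image x).card ≤ r →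
      ∃ m' : ℕ, 1 ≤ m' ∧ m' ≤ f ∧ ∃ y : ℕ → ℝ,
        (Finset.Icc 1 m').image y = (Finset.Icc 1 m).image x ∧
        ∀ q : ℕ → ℝ, dF m ℓ x q = dF m' ℓ y q :=
  stmt10_general r ℓ
end
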